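/- arXiv:2306.12583 — 8 statements merged into one kernel-verified Lean document; each statement's English description precedes it below -/
import Mathlib

section
/- If S is an error-detecting open-locating-dominating (DET:OLD) set of a graph G, then every vertex of G has at most one neighbor of degree 2. -/
open SimpleGraph Finset

def detOLD {V : Type*} [Fintype V] [DecidableEq V] (G : SimpleGraph V) [DecidableRel G.Adj]
    (S : Finset V) : Prop :=
  (∀ v : V, 2 ≤ (G.neighborFinset v ∩ S).card) ∧
  ∀ u v : V, u ≠ v →
    2 ≤ ((G.neighborFinset u ∩ S) \ (G.neighborFinset v ∩ S)).card ∨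
    2 ≤ ((G.neighborFinset v ∩ S) \ (G.neighborFinset u ∩ S)).card

theorem stmt1 {V : Type*} [Fintype V] [DecidableEq V] (G : SimpleGraph V) [DecidableRel G.Adj]
    (S : Finset V) (hS : detOLD G S) :
    ∀ v : V, ((G.neighborFinset v).filter (fun u => G.degree u = 2)).card ≤ 1 := by
  intro v
  rw [Finset.card_le_one]
  intro a ha b hb
  by_contra hab
  simp only [Finset.mem_filter, SimpleGraph.mem_neighborFinset] at ha hb
  obtain ⟨hva, hda⟩ := ha
  obtain ⟨hvb, hdb⟩ := hb
  have key : ∀ u : V, G.degree u = 2 → G.neighborFinset u ∩ S = G.neighborFinset u := by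
    intro u hu
    apply Finset.eq_of_subset_of_card_le Finset.inter_subset_left
    have := hS.1 u
    have hc : (G.neighborFinset u).card = 2 := by
      rwa [SimpleGraph.card_neighborFinset_eq_degree]
    omega
  have hA := key a hda
  have hB := key b hdb
  have hvina : v ∈ G.neighborFinset a := by
    rw [SimpleGraph.mem_neighborFinset]; exact hva.symm
  have hvinb : v ∈ G.neighborFinset b := by
    rw [SimpleGraph.mem_neighborFinset]; exact hvb.symm
  have hca : (G.neighborFinset a).card = 2 := by
    rwa [SimpleGraph.card_neighborFinset_eq_degree]
  have hcb : (G.neighborFinset b).card = 2 := by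
    rwa [SimpleGraph.card_neighborFinset_eq_degree]
  have small : ∀ (s t : Finset V), v ∈ s → v ∈ t → s.card = 2 → (s \ t).card ≤ 1 := by
    intro s t hs ht hcs
    have hsub : s \ t ⊆ s.erase v := by
      intro x hx
      rw [Finset.mem_sdiff] at hx
      rw [Finset.mem_erase]
      exact ⟨fun h => hx.2 (h ▸ ht), hx.1⟩
    calc (s \ t).card ≤ (s.erase v).card := Finset.card_le_card hsub
      _ = s.card - 1 := Finset.card_erase_of_mem hs
      _ ≤ 1 := by omega
  rcases hS.2 a b hab with h | h
  · rw [hA, hB] at h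
    have := small _ _ hvina hvinb hca
    omega
  · rw [hA, hB] at h
    have := small _ _ hvinb hvina hcb
    omega
end

section
/- If a finite simple graph G with n vertices and m edges admits a DET:OLD set, then m ≥ ⌈(3n − ⌊n/2⌋)/2⌉. -/
open SimpleGraph Finset

lemma detOLD_min_deg {V : Type*} [Fintype V] [DecidableEq V] (G : SimpleGraph V)
    [DecidableRel G.Adj] {S : Finset V} (hS : detOLD G S) (v : V) : 2 ≤ G.degree v :=
  le_trans (hS.1 v) (Finset.card_le_card Finset.inter_subset_left)

lemma detOLD_unique {V : Type*} [Fintype V] [DecidableEq V] (G : SimpleGraph V)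
    [DecidableRel G.Adj] {S : Finset V} (hS : detOLD G S) {u v w : V}
    (hu : G.degree u = 2) (hv : G.degree v = 2) (huv : u ≠ v)
    (haw : G.Adj w u) (hbw : G.Adj w v) : False := by
  have h1 : G.neighborFinset u ∩ S = G.neighborFinset u :=
    Finset.eq_of_subset_of_card_le Finset.inter_subset_left (by rw [card_neighborFinset_eq_degree, hu]; exact hS.1 u)
  have h2 : G.neighborFinset v ∩ S = G.neighborFinset v :=
    Finset.eq_of_subset_of_card_le Finset.inter_subset_left (by rw [card_neighborFinset_eq_degree, hv]; exact hS.1 v)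
  have hwu : w ∈ G.neighborFinset u := by rw [mem_neighborFinset]; exact haw.symm
  have hwv : w ∈ G.neighborFinset v := by rw [mem_neighborFinset]; exact hbw.symm
  have key : ∀ a b : V, w ∈ G.neighborFinset a → w ∈ G.neighborFinset b →
      G.degree a = 2 → ¬ (2 ≤ (G.neighborFinset a \ G.neighborFinset b).card) := by
    intro a b hwa hwb hda hle
    have hsub : G.neighborFinset a \ G.neighborFinset b ⊆ (G.neighborFinset a).erase w := by
      intro x hx
      rw [Finset.mem_sdiff] at hx
      refine Finset.mem_erase.mpr ⟨?_, hx.1⟩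
      rintro rfl; exact hx.2 hwb
    have := Finset.card_le_card hsub
    rw [Finset.card_erase_of_mem hwa, card_neighborFinset_eq_degree, hda] at this
    omega
  rcases hS.2 u v huv with hle | hle
  · rw [h1, h2] at hle; exact key u v hwu hwv hu hle
  · rw [h1, h2] at hle; exact key v u hwv hwu hv hle

theorem stmt4 {V : Type*} [Fintype V] [DecidableEq V] (G : SimpleGraph V) [DecidableRel G.Adj]
    (h : ∃ S : Finset V, detOLD G S) :
    (3 * Fintype.card V - Fintype.card V / 2 + 1) / 2 ≤ G.edgeFinset.card := by
  obtain ⟨S, hS⟩ := h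
  set n := Fintype.card V with hn
  set D2 : Finset V := Finset.univ.filter (fun v => G.degree v = 2) with hD2
  -- 2 * |D2| ≤ n
  have hcount : 2 * D2.card ≤ n := by
    have hdeg : ∀ v : V, G.degree v = ∑ u : V, if G.Adj v u then 1 else 0 := by
      intro v
      rw [← SimpleGraph.card_neighborFinset_eq_degree, neighborFinset_eq_filter,
        Finset.card_filter]
    calc 2 * D2.card = ∑ v ∈ D2, G.degree v := by
          rw [Finset.sum_congr rfl (fun v hv => (Finset.mem_filter.mp hv).2),
            Finset.sum_const, smul_eq_mul, mul_comm]
      _ = ∑ v ∈ D2, ∑ u : V, if G.Adj v u then 1 else 0 :=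
          Finset.sum_congr rfl (fun v _ => hdeg v)
      _ = ∑ u : V, ∑ v ∈ D2, if G.Adj v u then 1 else 0 := Finset.sum_comm
      _ ≤ ∑ _u : V, 1 := by
          refine Finset.sum_le_sum fun u _ => ?_
          rw [← Finset.card_filter]
          refine Finset.card_le_one.mpr fun a ha b hb => ?_
          rw [Finset.mem_filter, Finset.mem_filter] at ha hb
          by_contra hne
          exact detOLD_unique G hS ha.1.2 hb.1.2 hne ha.2.symm hb.2.symm
      _ = n := by rw [Finset.sum_const, smul_eq_mul, mul_one, Finset.card_univ]
  -- 3n ≤ 2m + |D2|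
  have hsum : 3 * n ≤ 2 * G.edgeFinset.card + D2.card := by
    rw [← SimpleGraph.sum_degrees_eq_twice_card_edges, hD2, Finset.card_filter]
    calc 3 * n = ∑ _v : V, 3 := by rw [Finset.sum_const, smul_eq_mul, mul_comm, Finset.card_univ]
      _ ≤ ∑ v : V, (G.degree v + if G.degree v = 2 then 1 else 0) := by
          refine Finset.sum_le_sum fun v _ => ?_
          have := detOLD_min_deg G hS v
          by_cases h2 : G.degree v = 2 <;> simp [h2] <;> omega
      _ = (∑ v : V, G.degree v) + ∑ v : V, (if G.degree v = 2 then 1 else 0) :=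
          Finset.sum_add_distrib
  omega
end

section
/- If a finite simple graph G with n vertices admits a DET:OLD set, and p denotes the number of vertices of degree 2 in G, then p ≤ ⌊n/2⌋. -/
open SimpleGraph Finset

lemma factA {V : Type*} [Fintype V] [DecidableEq V] (G : SimpleGraph V) [DecidableRel G.Adj]
    {S : Finset V} (hS : detOLD G S) {x u v : V} (hu : G.Adj x u) (hv : G.Adj x v)
    (du : G.degree u = 2) (dv : G.degree v = 2) (huv : u ≠ v) : False := by
  have hNu : G.neighborFinset u ∩ S = G.neighborFinset u := by
    apply Finset.eq_of_subset_of_card_le (Finset.inter_subset_left)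
    rw [← G.card_neighborFinset_eq_degree] at du
    exact du ▸ hS.1 u
  have hNv : G.neighborFinset v ∩ S = G.neighborFinset v := by
    apply Finset.eq_of_subset_of_card_le (Finset.inter_subset_left)
    rw [← G.card_neighborFinset_eq_degree] at dv
    exact dv ▸ hS.1 v
  have hxu : x ∈ G.neighborFinset u := by rwa [mem_neighborFinset, adj_comm]
  have hxv : x ∈ G.neighborFinset v := by rwa [mem_neighborFinset, adj_comm]
  have h1 : (G.neighborFinset u \ G.neighborFinset v).card ≤ 1 := by
    have : G.neighborFinset u \ G.neighborFinset v ⊆ (G.neighborFinset u).erase x := by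
      intro y hy
      rw [Finset.mem_sdiff] at hy
      refine Finset.mem_erase.2 ⟨?_, hy.1⟩
      rintro rfl; exact hy.2 hxv
    calc _ ≤ ((G.neighborFinset u).erase x).card := Finset.card_le_card this
      _ = (G.neighborFinset u).card - 1 := Finset.card_erase_of_mem hxu
      _ ≤ 1 := by rw [G.card_neighborFinset_eq_degree, du]
  have h2 : (G.neighborFinset v \ G.neighborFinset u).card ≤ 1 := by
    have : G.neighborFinset v \ G.neighborFinset u ⊆ (G.neighborFinset v).erase x := by
      intro y hy
      rw [Finset.mem_sdiff] at hy
      refine Finset.mem_erase.2 ⟨?_, hy.1⟩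
      rintro rfl; exact hy.2 hxu
    calc _ ≤ ((G.neighborFinset v).erase x).card := Finset.card_le_card this
      _ = (G.neighborFinset v).card - 1 := Finset.card_erase_of_mem hxv
      _ ≤ 1 := by rw [G.card_neighborFinset_eq_degree, dv]
  rcases hS.2 u v huv with hc | hc
  · rw [hNu, hNv] at hc; omega
  · rw [hNu, hNv] at hc; omega

theorem stmt5 {V : Type*} [Fintype V] [DecidableEq V] (G : SimpleGraph V) [DecidableRel G.Adj]
    (h : ∃ S : Finset V, detOLD G S) :
    (Finset.univ.filter (fun v : V => G.degree v = 2)).card ≤ Fintype.card V / 2 := by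
  obtain ⟨S, hS⟩ := h
  have key : ∀ v : V, ∃ w : V, G.degree v = 2 → G.Adj v w ∧ G.degree w ≠ 2 := by
    intro v
    by_cases hv : G.degree v = 2
    · by_contra hcon
      push_neg at hcon
      have hall : ∀ w ∈ G.neighborFinset v, G.degree w = 2 := by
        intro w hw
        exact (hcon w).2 ((mem_neighborFinset _ _ _).1 hw)
      have hcard : 1 < (G.neighborFinset v).card := by
        rw [G.card_neighborFinset_eq_degree, hv]; norm_num
      obtain ⟨a, ha, b, hb, hab⟩ := Finset.one_lt_card.1 hcard
      exact factA G hS ((mem_neighborFinset _ _ _).1 ha) ((mem_neighborFinset _ _ _).1 hb)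
        (hall a ha) (hall b hb) hab
    · exact ⟨v, fun h => absurd h hv⟩
  choose f hf using key
  have hle : (Finset.univ.filter (fun v : V => G.degree v = 2)).card ≤
      (Finset.univ.filter (fun v : V => ¬ G.degree v = 2)).card := by
    apply Finset.card_le_card_of_injOn f
    · intro v hv
      rw [Finset.mem_coe, Finset.mem_filter] at hv ⊢
      exact ⟨Finset.mem_univ _, (hf v hv.2).2⟩
    · intro u hu v hv hfe
      rw [Finset.coe_filter] at hu hv
      simp only [Set.mem_setOf_eq] at hu hv
      by_contra hne
      have h1 := (hf u hu.2).1
      have h2 := (hf v hv.2).1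
      rw [hfe] at h1
      exact factA G hS h1.symm h2.symm hu.2 hv.2 hne
  have htot := Finset.card_filter_add_card_filter_not
    (s := (Finset.univ : Finset V)) (p := fun v : V => G.degree v = 2)
  rw [Finset.card_univ] at htot
  omega
end

section
/- If a cubic graph G contains a 4-cycle, then G admits no DET:OLD set. -/
open SimpleGraph Finset

lemma key_card {V : Type*} [Fintype V] [DecidableEq V] (G : SimpleGraph V) [DecidableRel G.Adj]
    (S : Finset V) {u w b d : V} (hdeg : G.degree u = 3)
    (hub : G.Adj u b) (hud : G.Adj u d) (hwb : G.Adj w b) (hwd : G.Adj w d) (hbd : b ≠ d) :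
    ((G.neighborFinset u ∩ S) \ (G.neighborFinset w ∩ S)).card ≤ 1 := by
  have hsub : (G.neighborFinset u ∩ S) \ (G.neighborFinset w ∩ S) ⊆
      G.neighborFinset u \ {b, d} := by
    intro x hx
    simp only [mem_sdiff, mem_inter, mem_neighborFinset, mem_insert, mem_singleton] at hx ⊢
    refine ⟨hx.1.1, ?_⟩
    rintro (rfl | rfl)
    · exact hx.2 ⟨hwb, hx.1.2⟩
    · exact hx.2 ⟨hwd, hx.1.2⟩
  have hbdsub : ({b, d} : Finset V) ⊆ G.neighborFinset u := by
    intro x hx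
    simp only [mem_insert, mem_singleton] at hx
    rcases hx with rfl | rfl <;> simp [mem_neighborFinset, hub, hud]
  calc ((G.neighborFinset u ∩ S) \ (G.neighborFinset w ∩ S)).card
      ≤ (G.neighborFinset u \ {b, d}).card := card_le_card hsub
    _ = (G.neighborFinset u).card - ({b, d} : Finset V).card := card_sdiff_of_subset hbdsub
    _ = 1 := by
        rw [card_neighborFinset_eq_degree, hdeg, card_insert_of_notMem (by simp [hbd]),
          card_singleton]

theorem stmt9 {V : Type*} [Fintype V] [DecidableEq V] (G : SimpleGraph V) [DecidableRel G.Adj]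
    (hcubic : ∀ v : V, G.degree v = 3)
    (hC4 : ∃ (v : V) (c : G.Walk v v), c.IsCycle ∧ c.length = 4) :
    ¬ ∃ S : Finset V, detOLD G S := by
  rintro ⟨S, _, hdist⟩
  obtain ⟨v, c, hc, hl⟩ := hC4
  cases c with
  | nil => simp at hl
  | cons h1 p =>
    cases p with
    | nil => simp at hl
    | cons h2 p =>
      cases p with
      | nil => simp at hl
      | cons h3 p =>
        cases p with
        | nil => simp at hl
        | cons h4 p =>
          cases p with
          | cons h5 p => simp [Walk.length_cons] at hl
          | nil =>
            rename_i b w d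
            -- h1 : G.Adj v b, h2 : G.Adj b w, h3 : G.Adj w d, h4 : G.Adj d v
            have hnd := hc.support_nodup
            simp [Walk.support_cons, List.nodup_cons] at hnd
            have hvw : v ≠ w := fun h => (hnd.2.1.2) h.symm
            have hbd : b ≠ d := hnd.1.2.1
            have hdegv := hcubic v
            have hdegw := hcubic w
            rcases hdist v w hvw with h | h
            · exact absurd h (by
                have := key_card G S hdegv h1 h4.symm h2.symm h3 hbd; omega)
            · exact absurd h (by
                have := key_card G S hdegw h2.symm h3 h1 h4.symm hbd; omega)
end

section
/- Let G be a C4-free cubic graph and let S̄ ⊆ V(G) be such that no two distinct vertices of S̄ are joined by a walk of length 2 or of length 4. Then S = V(G) − S̄ is a DET:OLD set of G. -/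
open SimpleGraph Finset

lemma cycle4 {V : Type*} {G : SimpleGraph V} {u x v y : V}
    (h1 : G.Adj u x) (h2 : G.Adj x v) (h3 : G.Adj v y) (h4 : G.Adj y u)
    (huv : u ≠ v) (hxy : x ≠ y) :
    ∃ (w : V) (c : G.Walk w w), c.IsCycle ∧ c.length = 4 := by
  refine ⟨u, .cons h1 (.cons h2 (.cons h3 (.cons h4 .nil))), ?_, rfl⟩
  have a1 := h1.ne; have a2 := h2.ne; have a3 := h3.ne; have a4 := h4.ne
  have b1 := h1.ne'; have b2 := h2.ne'; have b3 := h3.ne'; have b4 := h4.ne'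
  simp_all [Walk.isCycle_def, Walk.isTrail_def, Sym2.eq_iff, ne_comm]

theorem stmt10 {V : Type*} [Fintype V] [DecidableEq V] (G : SimpleGraph V) [DecidableRel G.Adj]
    (hcubic : ∀ v : V, G.degree v = 3)
    (hC4 : ¬ ∃ (v : V) (c : G.Walk v v), c.IsCycle ∧ c.length = 4)
    (Sbar : Finset V)
    (hSbar : ∀ u ∈ Sbar, ∀ v ∈ Sbar, u ≠ v →
      ¬ ∃ w : G.Walk u v, w.length = 2 ∨ w.length = 4) :
    detOLD G (Finset.univ \ Sbar) := by
  -- at most one common neighbor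
  have hcn : ∀ u v : V, u ≠ v → (G.neighborFinset u ∩ G.neighborFinset v).card ≤ 1 := by
    intro u v huv
    by_contra h
    push_neg at h
    obtain ⟨x, hx, y, hy, hxy⟩ := Finset.one_lt_card.mp h
    simp only [mem_inter, mem_neighborFinset] at hx hy
    exact hC4 (cycle4 hx.1 hx.2.symm hy.2 hy.1.symm huv hxy)
  -- at most one neighbor in Sbar
  have hnb : ∀ v : V, (G.neighborFinset v ∩ Sbar).card ≤ 1 := by
    intro v
    by_contra h
    push_neg at h
    obtain ⟨x, hx, y, hy, hxy⟩ := Finset.one_lt_card.mp h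
    simp only [mem_inter, mem_neighborFinset] at hx hy
    exact hSbar x hx.2 y hy.2 hxy ⟨.cons hx.1.symm (.cons hy.1 .nil), Or.inl rfl⟩
  have hNS : ∀ v : V, G.neighborFinset v ∩ (Finset.univ \ Sbar) = G.neighborFinset v \ Sbar := by
    intro v; ext w; simp [and_comm]
  have hcard : ∀ v : V, 2 ≤ (G.neighborFinset v ∩ (Finset.univ \ Sbar)).card := by
    intro v
    rw [hNS]
    have h1 := Finset.card_sdiff_add_card_inter (G.neighborFinset v) Sbar
    have h2 := hnb v
    have h3 : (G.neighborFinset v).card = 3 := hcubic v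
    omega
  refine ⟨hcard, ?_⟩
  intro u v huv
  by_contra h
  push_neg at h
  obtain ⟨h1, h2⟩ := h
  set A := G.neighborFinset u ∩ (Finset.univ \ Sbar) with hA
  set B := G.neighborFinset v ∩ (Finset.univ \ Sbar) with hB
  have hAB : A ∩ B ⊆ G.neighborFinset u ∩ G.neighborFinset v := by
    intro w hw; simp only [hA, hB, mem_inter] at hw ⊢; exact ⟨hw.1.1, hw.2.1⟩
  have hABc : (A ∩ B).card ≤ 1 := le_trans (Finset.card_le_card hAB) (hcn u v huv)
  have hsplit := Finset.card_sdiff_add_card_inter A B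
  have hcA := hcard u
  rw [← hA] at hcA
  -- so A ∩ B nonempty
  have hne : (A ∩ B).Nonempty := by
    rw [← Finset.card_pos]; omega
  obtain ⟨x, hx⟩ := hne
  have hxu : G.Adj u x := by have := hAB hx; simp only [mem_inter, mem_neighborFinset] at this; exact this.1
  have hxv : G.Adj v x := by have := hAB hx; simp only [mem_inter, mem_neighborFinset] at this; exact this.2
  have hxS : x ∉ Sbar := by
    simp only [hA, mem_inter, mem_sdiff] at hx
    exact hx.1.2.2
  -- u has a neighbor in Sbar
  have hgetbar : ∀ z : V, (G.neighborFinset z ∩ (Finset.univ \ Sbar)).card ≤ 2 →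
      ∃ a, G.Adj z a ∧ a ∈ Sbar := by
    intro z hz
    rw [hNS] at hz
    have h1 := Finset.card_sdiff_add_card_inter (G.neighborFinset z) Sbar
    have h3 : (G.neighborFinset z).card = 3 := hcubic z
    have : (G.neighborFinset z ∩ Sbar).Nonempty := by rw [← Finset.card_pos]; omega
    obtain ⟨a, ha⟩ := this
    simp only [mem_inter, mem_neighborFinset] at ha
    exact ⟨a, ha.1, ha.2⟩
  have hAc : A.card ≤ 2 := by omega
  have hsplit' := Finset.card_sdiff_add_card_inter B A
  have hcB := hcard v
  rw [← hB] at hcB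
  have hBc : B.card ≤ 2 := by rw [Finset.inter_comm] at hsplit'; omega
  obtain ⟨a, hau, haS⟩ := hgetbar u hAc
  obtain ⟨b, hbv, hbS⟩ := hgetbar v hBc
  by_cases hab : a = b
  · -- a and x are two common neighbors
    subst hab
    have hmem : a ∈ G.neighborFinset u ∩ G.neighborFinset v := by
      simp [hau, hbv]
    have hmem' : x ∈ G.neighborFinset u ∩ G.neighborFinset v := by
      simp [hxu, hxv]
    have hax : a ≠ x := fun h => hxS (h ▸ haS)
    have := Finset.one_lt_card.mpr ⟨a, hmem, x, hmem', hax⟩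
    exact absurd (hcn u v huv) (by omega)
  · exact hSbar a haS b hbS hab
      ⟨.cons hau.symm (.cons hxu (.cons hxv.symm (.cons hbv .nil))), Or.inr rfl⟩
end

section
/- Let S be a DET:OLD set on a cubic graph G. Then for all distinct vertices u, v ∉ S, there is no walk of length 2 and no walk of length 4 from u to v in G. -/
open SimpleGraph Finset

lemma card_erase_erase {V : Type*} [DecidableEq V] (s : Finset V) {a b : V}
    (ha : a ∈ s) (hb : b ∈ s) (hab : a ≠ b) (hcard : s.card = 3) :
    ((s.erase a).erase b).card = 1 := by
  rw [Finset.card_erase_of_mem (Finset.mem_erase.2 ⟨hab.symm, hb⟩),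
    Finset.card_erase_of_mem ha, hcard]

lemma no_common {V : Type*} [Fintype V] [DecidableEq V] (G : SimpleGraph V)
    [DecidableRel G.Adj] (hcubic : ∀ v : V, G.degree v = 3) (S : Finset V) (hS : detOLD G S)
    {x u v : V} (hu : u ∉ S) (hv : v ∉ S) (huv : u ≠ v)
    (hxu : G.Adj x u) (hxv : G.Adj x v) : False := by
  have h2 := hS.1 x
  have hsub : G.neighborFinset x ∩ S ⊆ ((G.neighborFinset x).erase u).erase v := by
    intro a ha
    rw [Finset.mem_inter] at ha
    refine Finset.mem_erase.2 ⟨?_, Finset.mem_erase.2 ⟨?_, ha.1⟩⟩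
    · rintro rfl; exact hv ha.2
    · rintro rfl; exact hu ha.2
  have hc := Finset.card_le_card hsub
  rw [card_erase_erase _ ((G.mem_neighborFinset x u).2 hxu)
    ((G.mem_neighborFinset x v).2 hxv) huv ((G.card_neighborFinset_eq_degree x).trans (hcubic x))] at hc
  omega

theorem stmt11 {V : Type*} [Fintype V] [DecidableEq V] (G : SimpleGraph V) [DecidableRel G.Adj]
    (hcubic : ∀ v : V, G.degree v = 3) (S : Finset V) (hS : detOLD G S) :
    ∀ u v : V, u ∉ S → v ∉ S → u ≠ v →
      ¬ ∃ w : G.Walk u v, w.length = 2 ∨ w.length = 4 := by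
  rintro u v hu hv huv ⟨w, hw | hw⟩
  · cases w with
    | nil => simp at hw
    | cons h1 p =>
      cases p with
      | nil => simp at hw
      | cons h2 p' =>
        cases p' with
        | nil => exact no_common G hcubic S hS hu hv huv h1.symm h2
        | cons h3 p'' => simp [Walk.length_cons] at hw
  · cases w with
    | nil => simp at hw
    | @cons _ a _ h1 p =>
      cases p with
      | nil => simp at hw
      | @cons _ b _ h2 p' =>
        cases p' with
        | nil => simp at hw
        | @cons _ c _ h3 p'' =>
          cases p'' with
          | nil => simp at hw
          | @cons _ d _ h4 p''' =>
            cases p''' with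
            | cons h5 q => simp [Walk.length_cons] at hw
            | nil =>
              -- adjacencies: u~a, a~b, b~c, c~v
              by_cases hbu : b = u
              · subst hbu
                exact no_common G hcubic S hS hu hv huv h3.symm h4
              by_cases hbv : b = v
              · subst hbv
                exact no_common G hcubic S hS hu hv huv h1.symm h2
              by_cases hac : a = c
              · subst hac
                exact no_common G hcubic S hS hu hv huv h1.symm h4
              -- main case
              have hdiff := hS.2 a c hac
              have key : ∀ (x z y w : V), w ∉ S → G.Adj x w → G.Adj x y → G.Adj z y →
                  y ≠ w → ((G.neighborFinset x ∩ S) \ (G.neighborFinset z ∩ S)).card ≤ 1 := by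
                intro x z y w hwS hxw hxy hzy hyw
                have hsub : (G.neighborFinset x ∩ S) \ (G.neighborFinset z ∩ S) ⊆
                    ((G.neighborFinset x).erase w).erase y := by
                  intro t ht
                  rw [Finset.mem_sdiff, Finset.mem_inter] at ht
                  refine Finset.mem_erase.2 ⟨?_, Finset.mem_erase.2 ⟨?_, ht.1.1⟩⟩
                  · rintro rfl
                    exact ht.2 (Finset.mem_inter.2 ⟨(G.mem_neighborFinset z t).2 hzy, ht.1.2⟩)
                  · rintro rfl; exact hwS ht.1.2
                have hc := Finset.card_le_card hsub
                rwa [card_erase_erase _ ((G.mem_neighborFinset x w).2 hxw)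
                  ((G.mem_neighborFinset x y).2 hxy) (Ne.symm hyw)
                  ((G.card_neighborFinset_eq_degree x).trans (hcubic x))] at hc
              have k1 := key a c b u hu h1.symm h2 h3.symm hbu
              have k2 := key c a b v hv h4 h3.symm h2 hbv
              omega
end

section
/- If G is a cubic graph on n vertices that admits a DET:OLD set, then G admits a DET:OLD set of size at most n − 1. -/
open SimpleGraph Finset

theorem stmt12 {V : Type*} [Fintype V] [DecidableEq V] (G : SimpleGraph V) [DecidableRel G.Adj]
    (hcubic : ∀ v : V, G.degree v = 3) (h : ∃ S : Finset V, detOLD G S) :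
    ∃ S : Finset V, detOLD G S ∧ S.card ≤ Fintype.card V - 1 := by
  obtain ⟨S, hS⟩ := h
  by_cases hSu : S = Finset.univ
  · subst hSu
    obtain ⟨hS1, hS2⟩ := hS
    rcases isEmpty_or_nonempty V with hE | hNE
    · exact ⟨∅, ⟨fun v => isEmptyElim v, fun u => isEmptyElim u⟩, by simp⟩
    · obtain ⟨x⟩ := hNE
      have hcard : ∀ u : V, (G.neighborFinset u).card = 3 := by
        intro u; rw [card_neighborFinset_eq_degree]; exact hcubic u
      have hboth : ∀ u v : V, u ≠ v →
          2 ≤ (G.neighborFinset u \ G.neighborFinset v).card ∧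
          2 ≤ (G.neighborFinset v \ G.neighborFinset u).card := by
        intro u v huv
        have h2 := hS2 u v huv
        simp only [Finset.inter_univ] at h2
        have e1 := Finset.card_sdiff_add_card_inter (G.neighborFinset u) (G.neighborFinset v)
        have e2 := Finset.card_sdiff_add_card_inter (G.neighborFinset v) (G.neighborFinset u)
        rw [Finset.inter_comm] at e2
        rw [hcard u] at e1
        rw [hcard v] at e2
        omega
      refine ⟨Finset.univ \ {x}, ⟨?_, ?_⟩, ?_⟩
      · intro v
        have hNT : G.neighborFinset v ∩ (Finset.univ \ {x}) = G.neighborFinset v \ {x} := by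
          ext w; simp [and_comm]
        rw [hNT]
        have := Finset.le_card_sdiff ({x} : Finset V) (G.neighborFinset v)
        have := hcard v
        simp only [Finset.card_singleton] at *
        omega
      · intro u v huv
        have hNTu : G.neighborFinset u ∩ (Finset.univ \ {x}) = G.neighborFinset u \ {x} := by
          ext w; simp [and_comm]
        have hNTv : G.neighborFinset v ∩ (Finset.univ \ {x}) = G.neighborFinset v \ {x} := by
          ext w; simp [and_comm]
        rw [hNTu, hNTv]
        obtain ⟨hA, hB⟩ := hboth u v huv
        by_cases hx : x ∈ G.neighborFinset u \ G.neighborFinset v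
        · right
          refine le_trans hB (Finset.card_le_card ?_)
          intro w hw
          simp only [Finset.mem_sdiff, Finset.mem_singleton] at *
          refine ⟨⟨hw.1, ?_⟩, fun hc => hw.2 hc.1⟩
          rintro rfl; exact hw.2 hx.1
        · left
          refine le_trans hA (Finset.card_le_card ?_)
          intro w hw
          simp only [Finset.mem_sdiff, Finset.mem_singleton] at *
          refine ⟨⟨hw.1, ?_⟩, fun hc => hw.2 hc.1⟩
          rintro rfl; exact hx ⟨hw.1, hw.2⟩
      · have h1 : (Finset.univ \ {x} : Finset V).card = (Finset.univ : Finset V).card - 1 := by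
          rw [Finset.card_sdiff_of_subset (Finset.singleton_subset_iff.mpr (Finset.mem_univ x))]
          simp
        rw [h1, Finset.card_univ]
  · refine ⟨S, hS, ?_⟩
    have hlt : S.card < Fintype.card V := by
      rw [← Finset.card_univ]
      exact Finset.card_lt_card (Finset.ssubset_univ_iff.mpr hSu)
    omega
end

section
/- If G is a cubic graph on n vertices that admits a DET:OLD set, then G admits a DET:OLD set of size at most (30/31)·n. -/
open SimpleGraph Finset

section Aux

variable {V : Type*} [Fintype V] [DecidableEq V] (G : SimpleGraph V) [DecidableRel G.Adj]

/-- `x` and `y` are joined by a walk of length 2 or 4. -/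
def walkRel (x y : V) : Prop :=
  (∃ a, G.Adj x a ∧ G.Adj a y) ∨ ∃ a b c, G.Adj x a ∧ G.Adj a b ∧ G.Adj b c ∧ G.Adj c y

lemma walkRel_symm {x y : V} (h : walkRel G x y) : walkRel G y x := by
  rcases h with ⟨a, h1, h2⟩ | ⟨a, b, c, h1, h2, h3, h4⟩
  · exact Or.inl ⟨a, h2.symm, h1.symm⟩
  · exact Or.inr ⟨c, b, a, h4.symm, h3.symm, h2.symm, h1.symm⟩

/-- All vertices other than `v` reachable from `v` by a walk of length 2 or 4. -/
def ball (v : V) : Finset V :=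
  (G.neighborFinset v).biUnion (fun a => (G.neighborFinset a).erase v) ∪
  (G.neighborFinset v).biUnion (fun a =>
    ((G.neighborFinset a).erase v).biUnion (fun b =>
      ((G.neighborFinset b).erase a).biUnion (fun c =>
        (G.neighborFinset c).erase b)))

lemma mem_ball_of_walkRel {v x : V} (hx : x ≠ v) (h : walkRel G v x) :
    x ∈ _root_.ball G v := by
  have walk2 : ∀ a : V, G.Adj v a → G.Adj a x → x ∈ _root_.ball G v := by
    intro a h1 h2
    refine mem_union_left _ (mem_biUnion.2 ⟨a, ?_, ?_⟩)
    · exact (mem_neighborFinset _ _ _).2 h1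
    · exact mem_erase.2 ⟨hx, (mem_neighborFinset _ _ _).2 h2⟩
  rcases h with ⟨a, h1, h2⟩ | ⟨a, b, c, h1, h2, h3, h4⟩
  · exact walk2 a h1 h2
  · by_cases hbv : b = v
    · exact walk2 c (hbv ▸ h3) h4
    · by_cases hca : c = a
      · exact walk2 a h1 (hca ▸ h4)
      · by_cases hxb : x = b
        · exact walk2 a h1 (hxb ▸ h2)
        · refine mem_union_right _ (mem_biUnion.2 ⟨a, (mem_neighborFinset _ _ _).2 h1,
            mem_biUnion.2 ⟨b, mem_erase.2 ⟨hbv, (mem_neighborFinset _ _ _).2 h2⟩,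
            mem_biUnion.2 ⟨c, mem_erase.2 ⟨hca, (mem_neighborFinset _ _ _).2 h3⟩,
            mem_erase.2 ⟨hxb, (mem_neighborFinset _ _ _).2 h4⟩⟩⟩⟩)

lemma card_erase_nbr (hcubic : ∀ v : V, G.degree v = 3) {a b : V} (hab : G.Adj a b) :
    ((G.neighborFinset b).erase a).card ≤ 2 := by
  have ha : a ∈ G.neighborFinset b := (mem_neighborFinset _ _ _).2 hab.symm
  have := Finset.card_erase_of_mem ha
  have hb : (G.neighborFinset b).card = 3 := hcubic b
  omega

lemma ball_card (hcubic : ∀ v : V, G.degree v = 3) (v : V) :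
    (_root_.ball G v).card ≤ 30 := by
  have hv : (G.neighborFinset v).card = 3 := hcubic v
  have h1 : ((G.neighborFinset v).biUnion
      (fun a => (G.neighborFinset a).erase v)).card ≤ 6 := by
    have := Finset.card_biUnion_le_card_mul (G.neighborFinset v)
      (fun a => (G.neighborFinset a).erase v) 2 (fun a ha =>
        card_erase_nbr G hcubic ((mem_neighborFinset _ _ _).1 ha))
    omega
  have h2 : ((G.neighborFinset v).biUnion (fun a =>
      ((G.neighborFinset a).erase v).biUnion (fun b =>
        ((G.neighborFinset b).erase a).biUnion (fun c =>
          (G.neighborFinset c).erase b)))).card ≤ 24 := by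
    have := Finset.card_biUnion_le_card_mul (G.neighborFinset v)
      (fun a => ((G.neighborFinset a).erase v).biUnion (fun b =>
        ((G.neighborFinset b).erase a).biUnion (fun c =>
          (G.neighborFinset c).erase b))) 8 ?_
    · omega
    intro a ha
    have haa := (mem_neighborFinset _ _ _).1 ha
    have := Finset.card_biUnion_le_card_mul ((G.neighborFinset a).erase v)
      (fun b => ((G.neighborFinset b).erase a).biUnion (fun c =>
        (G.neighborFinset c).erase b)) 4 ?_
    · have hca := card_erase_nbr G hcubic haa
      calc _ ≤ ((G.neighborFinset a).erase v).card * 4 := this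
        _ ≤ 8 := by omega
    intro b hb
    have hab : G.Adj a b := (mem_neighborFinset _ _ _).1 (Finset.mem_of_mem_erase hb)
    have := Finset.card_biUnion_le_card_mul ((G.neighborFinset b).erase a)
      (fun c => (G.neighborFinset c).erase b) 2 ?_
    · have hcb := card_erase_nbr G hcubic hab
      calc _ ≤ ((G.neighborFinset b).erase a).card * 2 := this
        _ ≤ 4 := by omega
    intro c hc
    exact card_erase_nbr G hcubic ((mem_neighborFinset _ _ _).1 (Finset.mem_of_mem_erase hc))
  calc (_root_.ball G v).card ≤ _ + _ := Finset.card_union_le _ _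
    _ ≤ 30 := by omega

lemma greedy (hcubic : ∀ v : V, G.degree v = 3) (A : Finset V) :
    ∃ T ⊆ A, (∀ x ∈ T, ∀ y ∈ T, x ≠ y → ¬ walkRel G x y) ∧ A.card ≤ 31 * T.card := by
  induction A using Finset.strongInduction with
  | _ A ih =>
    rcases A.eq_empty_or_nonempty with rfl | ⟨v, hv⟩
    · exact ⟨∅, by simp⟩
    · set B := A \ insert v (ball G v) with hB
      have hBA : B ⊂ A := by
        refine Finset.ssubset_iff_of_subset (Finset.sdiff_subset) |>.2 ⟨v, hv, ?_⟩
        simp [hB]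
      obtain ⟨T', hT'B, hpair, hcard⟩ := ih B hBA
      have hvT' : v ∉ T' := fun hmem => by
        have := hT'B hmem
        simp [hB] at this
      refine ⟨insert v T', ?_, ?_, ?_⟩
      · intro x hx
        rcases Finset.mem_insert.1 hx with rfl | hx
        · exact hv
        · exact (Finset.sdiff_subset) (hT'B hx)
      · intro x hx y hy hxy hrel
        have key : ∀ z ∈ T', ¬ walkRel G v z := by
          intro z hz hrel'
          have hzB := hT'B hz
          simp only [hB, Finset.mem_sdiff, Finset.mem_insert, not_or] at hzB
          exact hzB.2.2 (mem_ball_of_walkRel G hzB.2.1 hrel')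
        rcases Finset.mem_insert.1 hx with rfl | hx' <;>
          rcases Finset.mem_insert.1 hy with rfl | hy'
        · exact absurd rfl hxy
        · exact key y hy' hrel
        · exact key x hx' (walkRel_symm G hrel)
        · exact hpair x hx' y hy' hxy hrel
      · have hsub : A ⊆ B ∪ insert v (ball G v) := by
          intro x hx
          by_cases hmem : x ∈ insert v (_root_.ball G v)
          · exact Finset.mem_union_right _ hmem
          · exact Finset.mem_union_left _ (Finset.mem_sdiff.2 ⟨hx, hmem⟩)
        have h1 : A.card ≤ B.card + (insert v (_root_.ball G v)).card :=
          (Finset.card_le_card hsub).trans (Finset.card_union_le _ _)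
        have h2 : (insert v (_root_.ball G v)).card ≤ 31 := by
          have := Finset.card_insert_le v (ball G v)
          have := ball_card G hcubic v
          omega
        have h3 : (insert v T').card = T'.card + 1 := Finset.card_insert_of_notMem hvT'
        omega

/-- From the existence of a DET:OLD set, no two distinct vertices have two
distinct common neighbors. -/
lemma no_C4 (hcubic : ∀ v : V, G.degree v = 3) (h : ∃ S : Finset V, detOLD G S)
    {u v a b : V} (huv : u ≠ v) (hab : a ≠ b) (hua : G.Adj u a) (hub : G.Adj u b)
    (hva : G.Adj v a) (hvb : G.Adj v b) : False := by
  obtain ⟨S0, _, h2⟩ := h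
  have key : ∀ w z : V, G.Adj w a → G.Adj w b → G.Adj z a → G.Adj z b →
      ((G.neighborFinset w ∩ S0) \ (G.neighborFinset z ∩ S0)).card ≤ 1 := by
    intro w z hwa hwb hza hzb
    have hsub : (G.neighborFinset w ∩ S0) \ (G.neighborFinset z ∩ S0) ⊆
        G.neighborFinset w \ {a, b} := by
      intro x hx
      rw [Finset.mem_sdiff, Finset.mem_inter] at hx
      obtain ⟨⟨hxw, hxS⟩, hxn⟩ := hx
      refine Finset.mem_sdiff.2 ⟨hxw, ?_⟩
      intro hxab
      apply hxn
      rcases Finset.mem_insert.1 hxab with rfl | hxb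
      · exact Finset.mem_inter.2 ⟨(mem_neighborFinset _ _ _).2 hza, hxS⟩
      · rw [Finset.mem_singleton] at hxb
        subst hxb
        exact Finset.mem_inter.2 ⟨(mem_neighborFinset _ _ _).2 hzb, hxS⟩
    have hcard : (G.neighborFinset w \ {a, b}).card ≤ 1 := by
      have hss : ({a, b} : Finset V) ⊆ G.neighborFinset w := by
        intro x hx
        rcases Finset.mem_insert.1 hx with rfl | hx
        · exact (mem_neighborFinset _ _ _).2 hwa
        · rw [Finset.mem_singleton] at hx
          subst hx
          exact (mem_neighborFinset _ _ _).2 hwb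
      have h2' : ({a, b} : Finset V).card = 2 := Finset.card_pair hab
      have := Finset.card_sdiff_of_subset hss
      have hw : (G.neighborFinset w).card = 3 := hcubic w
      omega
    exact (Finset.card_le_card hsub).trans hcard
  rcases h2 u v huv with hc | hc
  · have := key u v hua hub hva hvb; omega
  · have := key v u hva hvb hua hub; omega

end Aux

theorem stmt13 {V : Type*} [Fintype V] [DecidableEq V] (G : SimpleGraph V) [DecidableRel G.Adj]
    (hcubic : ∀ v : V, G.degree v = 3) (h : ∃ S : Finset V, detOLD G S) :
    ∃ S : Finset V, detOLD G S ∧ (S.card : ℚ) ≤ (30 / 31 : ℚ) * Fintype.card V := by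
  classical
  obtain ⟨T, -, hpair, hcard⟩ := greedy G hcubic Finset.univ
  set S : Finset V := Finset.univ \ T with hS
  -- membership facts
  have hmemS : ∀ x : V, x ∈ S ↔ x ∉ T := by
    intro x; simp [hS]
  -- condition (1): every vertex has at least 2 neighbors in S
  have hcond1 : ∀ v : V, 2 ≤ (G.neighborFinset v ∩ S).card := by
    intro v
    have hT1 : (G.neighborFinset v ∩ T).card ≤ 1 := by
      refine Finset.card_le_one.2 ?_
      intro a ha b hb
      rw [Finset.mem_inter, mem_neighborFinset] at ha hb
      by_contra hab
      exact hpair a ha.2 b hb.2 hab (Or.inl ⟨v, ha.1.symm, hb.1⟩)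
    have hsub : G.neighborFinset v ⊆ (G.neighborFinset v ∩ S) ∪ (G.neighborFinset v ∩ T) := by
      intro x hx
      by_cases hxT : x ∈ T
      · exact Finset.mem_union_right _ (Finset.mem_inter.2 ⟨hx, hxT⟩)
      · exact Finset.mem_union_left _ (Finset.mem_inter.2 ⟨hx, (hmemS x).2 hxT⟩)
    have h1 : (G.neighborFinset v).card ≤
        (G.neighborFinset v ∩ S).card + (G.neighborFinset v ∩ T).card :=
      (Finset.card_le_card hsub).trans (Finset.card_union_le _ _)
    have hv : (G.neighborFinset v).card = 3 := hcubic v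
    omega
  -- condition (2)
  have hcond2 : ∀ u v : V, u ≠ v →
      2 ≤ ((G.neighborFinset u ∩ S) \ (G.neighborFinset v ∩ S)).card ∨
      2 ≤ ((G.neighborFinset v ∩ S) \ (G.neighborFinset u ∩ S)).card := by
    intro u v huv
    by_contra hcon
    push_neg at hcon
    obtain ⟨hAB, hBA⟩ := hcon
    set A := G.neighborFinset u ∩ S with hA
    set B := G.neighborFinset v ∩ S with hB
    have hABle : (A \ B).card ≤ 1 := by omega
    have hBAle : (B \ A).card ≤ 1 := by omega
    have hInter : (A ∩ B).card ≤ 1 := by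
      refine Finset.card_le_one.2 ?_
      intro a ha b hb
      by_contra hab
      rw [Finset.mem_inter] at ha hb
      have haA := Finset.mem_inter.1 ha.1
      have hbA := Finset.mem_inter.1 hb.1
      have haB := Finset.mem_inter.1 ha.2
      have hbB := Finset.mem_inter.1 hb.2
      exact no_C4 G hcubic h huv hab
        ((mem_neighborFinset _ _ _).1 haA.1) ((mem_neighborFinset _ _ _).1 hbA.1)
        ((mem_neighborFinset _ _ _).1 haB.1) ((mem_neighborFinset _ _ _).1 hbB.1)
    have hA2 : 2 ≤ A.card := hcond1 u
    have hB2 : 2 ≤ B.card := hcond1 v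
    have hAeq := Finset.card_inter_add_card_sdiff A B
    have hBeq := Finset.card_inter_add_card_sdiff B A
    have hABinter : (B ∩ A).card = (A ∩ B).card := by rw [Finset.inter_comm]
    -- a common neighbor c in S
    have hne : (A ∩ B).Nonempty := by
      rw [← Finset.card_pos]; omega
    obtain ⟨c, hc⟩ := hne
    rw [Finset.mem_inter] at hc
    have hcu : G.Adj u c := (mem_neighborFinset _ _ _).1 (Finset.mem_inter.1 hc.1).1
    have hcv : G.Adj v c := (mem_neighborFinset _ _ _).1 (Finset.mem_inter.1 hc.2).1
    have hcS : c ∈ S := (Finset.mem_inter.1 hc.1).2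
    -- a neighbor of u in T
    have hTnbr : ∀ w : V, (G.neighborFinset w ∩ S).card ≤ 2 →
        ∃ x, G.Adj w x ∧ x ∈ T := by
      intro w hw
      have hne : ¬ G.neighborFinset w ⊆ S := by
        intro hsub
        have : G.neighborFinset w ∩ S = G.neighborFinset w :=
          Finset.inter_eq_left.2 hsub
        rw [this] at hw
        have hw3 : (G.neighborFinset w).card = 3 := hcubic w
        omega
      obtain ⟨x, hxw, hxS⟩ := Finset.not_subset.1 hne
      refine ⟨x, (mem_neighborFinset _ _ _).1 hxw, ?_⟩
      by_contra hxT
      exact hxS ((hmemS x).2 hxT)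
    have hAcard : A.card ≤ 2 := by
      rw [← Finset.card_inter_add_card_sdiff A B]
      exact add_le_add hInter hABle
    have hBcard : B.card ≤ 2 := by
      rw [← Finset.card_inter_add_card_sdiff B A]
      have hIBA : (B ∩ A).card ≤ 1 := by rw [hABinter]; exact hInter
      exact add_le_add hIBA hBAle
    obtain ⟨ub, hub, hubT⟩ := hTnbr u hAcard
    obtain ⟨vb, hvb, hvbT⟩ := hTnbr v hBcard
    by_cases hbb : ub = vb
    · subst hbb
      have hubc : ub ≠ c := by
        intro heq
        subst heq
        exact ((hmemS ub).1 hcS) hubT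
      exact no_C4 G hcubic h huv hubc hub hcu hvb hcv
    · exact hpair ub hubT vb hvbT hbb
        (Or.inr ⟨u, c, v, hub.symm, hcu, hcv.symm, hvb⟩)
  refine ⟨S, ⟨hcond1, hcond2⟩, ?_⟩
  -- cardinality
  have hSTcard : S.card + T.card = Fintype.card V := by
    have hT : T ⊆ Finset.univ := Finset.subset_univ T
    have := Finset.card_sdiff_of_subset hT
    simp only [hS, Finset.card_univ] at this ⊢
    have hTle : T.card ≤ Fintype.card V := Finset.card_le_univ T
    omega
  have hn : Fintype.card V ≤ 31 * T.card := by
    rw [Finset.card_univ] at hcard; exact hcard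
  have hfinal : 31 * S.card ≤ 30 * Fintype.card V := by omega
  have hcast : (31 : ℚ) * S.card ≤ 30 * Fintype.card V := by
    exact_mod_cast hfinal
  linarith
end
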